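/- Removing the complement-checking L-component from A_G yields a nondeterministic Büchi (index (1,2)) automaton recognizing G: the automaton with states g₁ (rank 1), g₂ (rank 2), ⊤₂ (rank 2), ⊥₁ (rank 1), transitions from g-states on a to (g₂,⊤₂) or (⊤₂,g₁) and on b to (⊥₁,⊥₁), accepts a tree iff it has a good branch. -/

import Mathlib

/-- Infinite binary trees over {a,b}; `true` = a, `false` = b. -/
abbrev Tree2 := List (Fin 2) → Bool

/-- The length-`n` prefix of a branch. -/
def pre (β : ℕ → Fin 2) (n : ℕ) : List (Fin 2) := List.ofFn (fun i : Fin n => β i)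

/-- A branch is good: all its finite prefixes are labelled `a` and it turns left (0)
infinitely often. -/
def Good (t : Tree2) (β : ℕ → Fin 2) : Prop :=
  (∀ n, t (pre β n) = true) ∧ (∀ m, ∃ n ≥ m, β n = 0)

/-- `β` is strictly to the left of `γ`. -/
def LeftOf (β γ : ℕ → Fin 2) : Prop :=
  ∃ n, (∀ i < n, β i = γ i) ∧ β n = 0 ∧ γ n = 1

/-- A branch passes through a node. -/
def Through (γ : ℕ → Fin 2) (v : List (Fin 2)) : Prop := pre γ v.length = v

/-- The set of trees that have a good branch. -/
def G : Set Tree2 := {t | ∃ β, Good t β}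

/-- `r` occurs infinitely often in the sequence `g`. -/
def InfOften (g : ℕ → ℕ) (r : ℕ) : Prop := ∀ m, ∃ n ≥ m, g n = r

/-- Parity condition: the maximal value occurring infinitely often is even. -/
def ParityOk (g : ℕ → ℕ) : Prop :=
  ∃ r, Even r ∧ InfOften g r ∧ ∀ r', InfOften g r' → r' ≤ r

/-- States of the Büchi automaton obtained from `A_G` by removing the L-component. -/
inductive QB | g1 | g2 | top2 | bot1
deriving DecidableEq

def rankB : QB → ℕ
  | .g1 => 1 | .g2 => 2 | .top2 => 2 | .bot1 => 1

/-- Transitions: from g-states on `a` to `(g₂, ⊤₂)` or `(⊤₂, g₁)`, on `b` to `(⊥₁, ⊥₁)`. -/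
def deltaB : QB → Bool → QB → QB → Prop := fun q a q1 q2 =>
  match q, a with
  | .g1, true | .g2, true => (q1 = .g2 ∧ q2 = .top2) ∨ (q1 = .top2 ∧ q2 = .g1)
  | .g1, false | .g2, false => q1 = .bot1 ∧ q2 = .bot1
  | .top2, _ => q1 = .top2 ∧ q2 = .top2
  | .bot1, _ => q1 = .bot1 ∧ q2 = .bot1

def IsRunB (t : Tree2) (q0 : QB) (ρ : List (Fin 2) → QB) : Prop :=
  ρ [] = q0 ∧ ∀ v : List (Fin 2), deltaB (ρ v) (t v) (ρ (v ++ [0])) (ρ (v ++ [1]))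

def AccRunB (t : Tree2) (q0 : QB) (ρ : List (Fin 2) → QB) : Prop :=
  IsRunB t q0 ρ ∧ ∀ β : ℕ → Fin 2, ParityOk (fun n => rankB (ρ (pre β n)))


/-! An accepting run never enters `⊥₁`: a branch through a `⊥₁` node stays in `⊥₁`, so rank 2
does not recur on it. Hence every node in a g-state is labelled `a`, and exactly one of its
children is again in a g-state: the left child in `g₂` or the right child in `g₁`. Following the
g-states gives a branch labelled `a` whose rank is 2 exactly after a left turn, so it turns left
infinitely often. Conversely, a good branch `β` is guessed by the run with g-states along `β`
and `⊤₂` elsewhere: every other branch ends in `⊤₂`, and `β` visits `g₂` after each left turn. -/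

lemma pre_succ (β : ℕ → Fin 2) (n : ℕ) : pre β (n + 1) = pre β n ++ [β n] := by
  rw [pre, List.ofFn_succ_last]
  rfl

lemma pre_length (β : ℕ → Fin 2) (n : ℕ) : (pre β n).length = n := List.length_ofFn

instance (β : ℕ → Fin 2) (v : List (Fin 2)) : Decidable (Through β v) :=
  inferInstanceAs (Decidable (pre β v.length = v))

lemma through_pre_iff {β γ : ℕ → Fin 2} {n : ℕ} : Through β (pre γ n) ↔ ∀ i < n, γ i = β i := by
  rw [Through, pre_length, pre, pre, List.ofFn_inj]
  simp [funext_iff, Fin.forall_iff, eq_comm]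

lemma through_append_singleton_iff {β : ℕ → Fin 2} {v : List (Fin 2)} {x : Fin 2} :
    Through β (v ++ [x]) ↔ Through β v ∧ β v.length = x := by
  simp [Through, pre_succ]

lemma through_getD (w : List (Fin 2)) : Through (fun i => w.getD i 0) w :=
  List.ext_getElem (by simp [pre]) (by simp [pre])

lemma parityOk_iff_infOften_two {g : ℕ → ℕ} (hg : ∀ n, g n = 1 ∨ g n = 2) :
    ParityOk g ↔ InfOften g 2 := by
  constructor
  · rintro ⟨r, hr, hinf, -⟩
    obtain ⟨n, -, rfl⟩ := hinf 0
    rcases hg n with h | h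
    · simp [h] at hr
    · rwa [h] at hinf
  · intro h2
    refine ⟨2, even_two, h2, fun r hr => ?_⟩
    obtain ⟨n, -, rfl⟩ := hr 0
    rcases hg n with h | h <;> omega

lemma rankB_eq_one_or_two (q : QB) : rankB q = 1 ∨ rankB q = 2 := by
  cases q <;> simp [rankB]

lemma accRunB_iff {t : Tree2} {q0 : QB} {ρ : List (Fin 2) → QB} :
    AccRunB t q0 ρ ↔ IsRunB t q0 ρ ∧ ∀ β, InfOften (fun n => rankB (ρ (pre β n))) 2 := by
  simp only [AccRunB, parityOk_iff_infOften_two (fun _ => rankB_eq_one_or_two _)]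

section AcceptingRun

variable {t : Tree2} {q0 : QB} {ρ : List (Fin 2) → QB}

lemma IsRunB.pre_eq_bot1_of_le (hρ : IsRunB t q0 ρ) {β : ℕ → Fin 2} {n m : ℕ}
    (hn : ρ (pre β n) = .bot1) (hm : n ≤ m) : ρ (pre β m) = .bot1 := by
  induction m, hm using Nat.le_induction with
  | base => exact hn
  | succ m _ ih =>
    have hδ := hρ.2 (pre β m)
    rw [ih] at hδ
    rw [pre_succ]
    rcases Fin.exists_fin_two.mp ⟨β m, rfl⟩ with h | h <;>
      cases t (pre β m) <;> simp_all [deltaB]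

lemma AccRunB.ne_bot1 (hρ : AccRunB t q0 ρ) (w : List (Fin 2)) : ρ w ≠ .bot1 := by
  intro hw
  set γ : ℕ → Fin 2 := fun i => w.getD i 0
  have hγw : pre γ w.length = w := through_getD w
  have hbot : ρ (pre γ w.length) = .bot1 := by rw [hγw]; exact hw
  obtain ⟨n, hn, h2⟩ := (accRunB_iff.mp hρ).2 γ w.length
  simp [hρ.1.pre_eq_bot1_of_le hbot hn, rankB] at h2

def IsGState (q : QB) : Prop := q = .g1 ∨ q = .g2

lemma AccRunB.label_of_isGState (hρ : AccRunB t q0 ρ) {v : List (Fin 2)}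
    (hv : IsGState (ρ v)) : t v = true := by
  by_contra hf
  have hδ := hρ.1.2 v
  rw [eq_false_of_ne_true hf] at hδ
  apply hρ.ne_bot1 (v ++ [0])
  rcases hv with h | h <;> rw [h] at hδ <;> exact hδ.1

def gDir (ρ : List (Fin 2) → QB) (v : List (Fin 2)) : Fin 2 :=
  if ρ (v ++ [0]) = .g2 then 0 else 1

lemma AccRunB.child_gDir (hρ : AccRunB t q0 ρ) {v : List (Fin 2)} (hv : IsGState (ρ v)) :
    ρ (v ++ [gDir ρ v]) = if gDir ρ v = 0 then .g2 else .g1 := by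
  have hδ := hρ.1.2 v
  rw [hρ.label_of_isGState hv] at hδ
  have hchildren : (ρ (v ++ [0]) = .g2 ∧ ρ (v ++ [1]) = .top2) ∨
      (ρ (v ++ [0]) = .top2 ∧ ρ (v ++ [1]) = .g1) := by
    rcases hv with h | h <;> rw [h] at hδ <;> exact hδ
  rcases hchildren with ⟨h0, -⟩ | ⟨h0, h1⟩
  · simp [gDir, h0]
  · simp [gDir, h0, h1]

def gPath (ρ : List (Fin 2) → QB) : ℕ → List (Fin 2)
  | 0 => []
  | n + 1 => gPath ρ n ++ [gDir ρ (gPath ρ n)]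

def gBranch (ρ : List (Fin 2) → QB) (n : ℕ) : Fin 2 := gDir ρ (gPath ρ n)

lemma pre_gBranch (ρ : List (Fin 2) → QB) (n : ℕ) : pre (gBranch ρ) n = gPath ρ n := by
  induction n with
  | zero => rfl
  | succ n ih => rw [pre_succ, ih]; rfl

lemma AccRunB.isGState_gPath (hρ : AccRunB t .g1 ρ) (n : ℕ) : IsGState (ρ (gPath ρ n)) := by
  induction n with
  | zero => exact Or.inl hρ.1.1
  | succ n ih =>
    rw [gPath, hρ.child_gDir ih]
    split
    · exact Or.inr rfl
    · exact Or.inl rfl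

lemma AccRunB.good_gBranch (hρ : AccRunB t .g1 ρ) : Good t (gBranch ρ) := by
  refine ⟨fun n => pre_gBranch ρ n ▸ hρ.label_of_isGState (hρ.isGState_gPath n), fun m => ?_⟩
  obtain ⟨n, hn, h2⟩ := (accRunB_iff.mp hρ).2 (gBranch ρ) (m + 1)
  obtain ⟨k, rfl⟩ : ∃ k, n = k + 1 := ⟨n - 1, by omega⟩
  refine ⟨k, by omega, ?_⟩
  simp only [pre_gBranch, gPath, hρ.child_gDir (hρ.isGState_gPath k)] at h2
  by_contra hk
  simp only [gBranch] at hk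
  simp [hk, rankB] at h2

end AcceptingRun

def branchRun (β : ℕ → Fin 2) (v : List (Fin 2)) : QB :=
  if Through β v then (if v.getLast? = some 0 then .g2 else .g1) else .top2

lemma branchRun_append_singleton (β : ℕ → Fin 2) (v : List (Fin 2)) (x : Fin 2) :
    branchRun β (v ++ [x]) =
      if Through β v ∧ β v.length = x then (if x = 0 then .g2 else .g1) else .top2 := by
  simp only [branchRun, through_append_singleton_iff, List.getLast?_append, List.getLast?_singleton,
    Option.some_or, Option.some.injEq]

lemma isRunB_branchRun {t : Tree2} {β : ℕ → Fin 2} (hβ : ∀ n, t (pre β n) = true) :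
    IsRunB t .g1 (branchRun β) := by
  refine ⟨by simp [branchRun, Through, pre], fun v => ?_⟩
  simp only [branchRun_append_singleton]
  by_cases hv : Through β v
  · have hstate : branchRun β v = .g1 ∨ branchRun β v = .g2 := by
      unfold branchRun; split_ifs <;> simp
    rw [show t v = true from hv ▸ hβ v.length]
    rcases Fin.exists_fin_two.mp ⟨β v.length, rfl⟩ with h | h <;>
      rcases hstate with hs | hs <;> simp [deltaB, hs, hv, h]
  · have hstate : branchRun β v = .top2 := if_neg hv
    simp [deltaB, hstate, hv]

lemma infOften_two_branchRun {β : ℕ → Fin 2} (hβ : ∀ m, ∃ n ≥ m, β n = 0) (γ : ℕ → Fin 2) :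
    InfOften (fun n => rankB (branchRun β (pre γ n))) 2 := by
  intro m
  by_cases hγ : γ = β
  · subst hγ
    obtain ⟨n, hn, h0⟩ := hβ m
    refine ⟨n + 1, by omega, ?_⟩
    simp [pre_succ, branchRun_append_singleton, Through, pre_length, h0, rankB]
  · obtain ⟨i, hi⟩ := Function.ne_iff.mp hγ
    refine ⟨max m (i + 1), le_max_left _ _, ?_⟩
    have hoff : ¬ Through β (pre γ (max m (i + 1))) :=
      fun h => hi (through_pre_iff.mp h i (by omega))
    simp [branchRun, hoff, rankB]

/-- The Büchi (index (1,2)) automaton recognizes `G`. -/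
theorem Buchi_recognizes_G (t : Tree2) :
    (∃ ρ, AccRunB t QB.g1 ρ) ↔ t ∈ G := by
  constructor
  · rintro ⟨ρ, hρ⟩
    exact ⟨gBranch ρ, hρ.good_gBranch⟩
  · rintro ⟨β, hlabel, hleft⟩
    exact ⟨branchRun β, accRunB_iff.mpr ⟨isRunB_branchRun hlabel, infOften_two_branchRun hleft⟩⟩
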